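/- Let μ₁ : Sym⁻ → ℤ/2ℤ be an arbitrary measure on the ring Sym⁻ generated by symmetric left-closed right-open intervals of ℝ, and fix a ∈ ℝ. Then the function g(t) = μ₁([[a,t)) is left continuous on ℝ ∪ {∞}: for every t there exists t' < t such that g(s) = g(t) for all s ∈ (t', t]; moreover μ₁ is the left Lebesgue–Stieltjes measure associated to g. -/

import Mathlib

/-- A (countably additive) binary measure on a family `U` of subsets of `X`. -/
def IsBinMeasure {X : Type*} (U : Set (Set X)) (μ : Set X → ZMod 2) : Prop :=
  ∀ A : ℕ → Set X, (∀ n, A n ∈ U) → Pairwise (Function.onFun Disjoint A) →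
    (⋃ n, A n) ∈ U →
    {n | μ (A n) = 1}.Finite ∧ μ (⋃ n, A n) = ∑ᶠ n, μ (A n)

/-- The symmetric left-closed right-open interval `[[a,b)`. -/
def symIco (a b : ℝ) : Set ℝ := Set.Ico (min a b) (max a b)

/-- The set ring (under symmetric difference and intersection) generated by the
symmetric intervals `[[a,b)`. -/
inductive SymRing : Set ℝ → Prop
  | base (a b : ℝ) : SymRing (symIco a b)
  | symmDiff {A B : Set ℝ} : SymRing A → SymRing B → SymRing (symmDiff A B)
  | inter {A B : Set ℝ} : SymRing A → SymRing B → SymRing (A ∩ B)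

/-!
Because `[[a,p) ∆ [[a,q) = [[p,q)` and a binary measure on a ring of sets is additive on symmetric
differences, `μ₁ [[p,q) = g p + g q`. If `g` failed to be left continuous at `t`, there would be a
strictly increasing sequence `uₙ → t` with `g uₙ ≠ g t` for every `n`. In `ℤ/2ℤ` all the `g uₙ`
are then equal, so each piece `[uₙ, uₙ₊₁)` has measure `g uₙ + g uₙ₊₁ = 0`, and countable additivity
gives `μ₁ [u₀, t) = 0`, whereas `μ₁ [u₀, t) = g u₀ + g t = 1`.
-/

open Set Filter Topology MeasureTheory Function
open scoped symmDiff

theorem ZMod.eq_zero_of_ne_one_mod_two {x : ZMod 2} : x ≠ 1 → x = 0 := by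
  revert x; decide

theorem ZMod.add_eq_zero_iff_eq_mod_two {x y : ZMod 2} : x + y = 0 ↔ x = y := by
  revert x y; decide

theorem ZMod.eq_of_ne_of_ne_mod_two {x y z : ZMod 2} : x ≠ z → y ≠ z → x = y := by
  revert x y z; decide

theorem iUnion_Ico_succ_eq_Ico_of_tendsto {α : Type*} [LinearOrder α] [TopologicalSpace α]
    [OrderClosedTopology α] {u : ℕ → α} {t : α} (hu : Monotone u)
    (hlim : Tendsto u atTop (𝓝 t)) :
    ⋃ n, Ico (u n) (u (n + 1)) = Ico (u 0) t := by
  refine subset_antisymm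
    (iUnion_subset fun n => Ico_subset_Ico (hu n.zero_le) (hu.ge_of_tendsto hlim _)) ?_
  rintro x ⟨hx0, hxt⟩
  obtain ⟨N, hN⟩ := (hlim.eventually (Ioi_mem_nhds hxt)).exists
  exact iUnion₂_subset_iUnion _ _ (Ico_subset_biUnion_Ico N u ⟨hx0, hN⟩)

namespace IsBinMeasure

variable {X : Type*} {U : Set (Set X)} {μ : Set X → ZMod 2}

theorem apply_empty (hμ : IsBinMeasure U μ) (hU : ∅ ∈ U) : μ ∅ = 0 := by
  obtain ⟨hfin, -⟩ := hμ (fun _ => ∅) (fun _ => hU) (fun _ _ _ => disjoint_empty _)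
    (by simpa using hU)
  refine ZMod.eq_zero_of_ne_one_mod_two fun h => infinite_univ (α := ℕ) ?_
  simpa [h] using hfin

theorem apply_union (hμ : IsBinMeasure U μ) (hU : IsSetRing U) {A B : Set X} (hA : A ∈ U)
    (hB : B ∈ U) (hAB : Disjoint A B) : μ (A ∪ B) = μ A + μ B := by
  classical
  let s : ℕ → Set X := fun n => if n = 0 then A else if n = 1 then B else ∅
  have hs : ∀ n, s n ∈ U := fun n => by
    unfold s; split_ifs
    exacts [hA, hB, hU.empty_mem]
  have hunion : ⋃ n, s n = A ∪ B := by
    refine subset_antisymm (iUnion_subset fun n => ?_)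
      (union_subset (subset_iUnion s 0) (subset_iUnion s 1))
    unfold s; split_ifs <;> simp
  have hdisj : Pairwise (Disjoint on s) := fun m n hmn => by
    simp only [onFun, s]
    split_ifs <;> simp_all [hAB.symm]
  have hsupp : Function.support (fun n => μ (s n)) ⊆ ({0, 1} : Finset ℕ) := fun n hn => by
    by_contra h
    simp_all [s, hμ.apply_empty hU.empty_mem]
  obtain ⟨-, hsum⟩ := hμ s hs hdisj (hunion ▸ hU.union_mem hA hB)
  rw [← hunion, hsum, finsum_eq_sum_of_support_subset _ hsupp]
  simp [s]

theorem apply_symmDiff (hμ : IsBinMeasure U μ) (hU : IsSetRing U) {A B : Set X} (hA : A ∈ U)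
    (hB : B ∈ U) : μ (A ∆ B) = μ A + μ B := by
  have hAB := hU.sdiff_mem hA hB
  have hBA := hU.sdiff_mem hB hA
  have hinter := hU.inter_mem hA hB
  have eA : μ A = μ (A \ B) + μ (A ∩ B) := by
    rw [← hμ.apply_union hU hAB hinter (disjoint_sdiff_left.mono_right inter_subset_right),
      sdiff_union_inter]
  have eB : μ B = μ (B \ A) + μ (A ∩ B) := by
    rw [← hμ.apply_union hU hBA hinter (disjoint_sdiff_left.mono_right inter_subset_left),
      inter_comm, sdiff_union_inter]
  rw [Set.symmDiff_def, hμ.apply_union hU hAB hBA disjoint_sdiff_sdiff, eA, eB, add_add_add_comm,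
    CharTwo.add_self_eq_zero, add_zero]

theorem apply_Ico_eq_zero_of_tendsto [LinearOrder X] [TopologicalSpace X] [OrderTopology X]
    (hμ : IsBinMeasure U μ) (hIco : ∀ a b, Ico a b ∈ U) {u : ℕ → X} {t : X} (hu : Monotone u)
    (hlim : Tendsto u atTop (𝓝 t)) (hzero : ∀ n, μ (Ico (u n) (u (n + 1))) = 0) :
    μ (Ico (u 0) t) = 0 := by
  have hunion := iUnion_Ico_succ_eq_Ico_of_tendsto hu hlim
  obtain ⟨-, hsum⟩ := hμ _ (fun n => hIco _ _) (by simpa using hu.pairwise_disjoint_on_Ico_succ)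
    (hunion ▸ hIco _ _)
  rw [← hunion, hsum, finsum_eq_zero_of_forall_eq_zero hzero]

end IsBinMeasure

theorem symIco_eq_symmDiff_Ici (p q : ℝ) : symIco p q = Ici p ∆ Ici q := by
  ext x
  simp only [symIco, mem_Ico, mem_symmDiff, mem_Ici]
  grind

theorem symIco_symmDiff_symIco (c p q : ℝ) : symIco c p ∆ symIco c q = symIco p q := by
  simp only [symIco_eq_symmDiff_Ici, symmDiff_symmDiff_symmDiff_comm, symmDiff_self,
    bot_symmDiff]

theorem symIco_of_le {p q : ℝ} (h : p ≤ q) : symIco p q = Ico p q := by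
  simp [symIco, h]

theorem symRing_Ico (p q : ℝ) : SymRing (Ico p q) := by
  rcases le_total p q with h | h
  · exact symIco_of_le h ▸ .base p q
  · simpa [Ico_eq_empty_of_le h, symIco] using SymRing.base p p

theorem isSetRing_symRing : IsSetRing {A | SymRing A} where
  empty_mem := by simpa [symIco] using SymRing.base 0 0
  union_mem A B hA hB := by
    have h : A ∆ B ∆ (A ∩ B) = A ∪ B := symmDiff_symmDiff_inf A B
    exact h ▸ (hA.symmDiff hB).symmDiff (hA.inter hB)
  sdiff_mem A B hA hB := by
    rw [← sdiff_inf_self_left, ← symmDiff_of_le inf_le_left]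
    exact (hA.inter hB).symmDiff hA

theorem stmt_18 (μ₁ : Set ℝ → ZMod 2)
    (hμ₁ : IsBinMeasure {A | SymRing A} μ₁) (a : ℝ)
    (g : ℝ → ZMod 2) (hg : ∀ t : ℝ, g t = μ₁ (symIco a t)) :
    (∀ t : ℝ, ∃ t' < t, ∀ s ∈ Set.Ioc t' t, g s = g t) ∧
    (∀ p q : ℝ, μ₁ (symIco p q) = g p + g q) := by
  have hsymIco : ∀ p q : ℝ, μ₁ (symIco p q) = g p + g q := fun p q => by
    rw [← symIco_symmDiff_symIco a, hμ₁.apply_symmDiff isSetRing_symRing (.base a p) (.base a q),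
      hg, hg]
  refine ⟨fun t => ?_, hsymIco⟩
  by_contra! hjump
  set S := {s | s < t ∧ g s ≠ g t}
  have hcofinal : ∀ b < t, ∃ s ∈ S, b < s := fun b hb => by
    obtain ⟨s, ⟨hbs, hst⟩, hne⟩ := hjump b hb
    exact ⟨s, ⟨hst.lt_of_ne (by rintro rfl; exact hne rfl), hne⟩, hbs⟩
  have hlub : IsLUB S t := ⟨fun s hs => hs.1.le, fun b hb => not_lt.1 fun hbt => by
    obtain ⟨s, hs, hbs⟩ := hcofinal b hbt
    exact (hb hs).not_gt hbs⟩
  obtain ⟨u, hu, -, hlim, huS⟩ := hlub.exists_seq_strictMono_tendsto_of_notMem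
    (fun ht => ht.1.false) ((hcofinal (t - 1) (by linarith)).imp fun _ hs => hs.1)
  have hzero : μ₁ (Ico (u 0) t) = 0 := by
    refine hμ₁.apply_Ico_eq_zero_of_tendsto symRing_Ico hu.monotone hlim fun n => ?_
    rw [← symIco_of_le (hu.monotone n.le_succ), hsymIco, ZMod.add_eq_zero_iff_eq_mod_two]
    exact ZMod.eq_of_ne_of_ne_mod_two (huS n).2 (huS (n + 1)).2
  rw [← symIco_of_le (huS 0).1.le, hsymIco, ZMod.add_eq_zero_iff_eq_mod_two] at hzero
  exact (huS 0).2 hzero
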